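/- Two atomic hypergraphs H and J are cognate if and only if they have the same set of constructions. -/

import Mathlib

namespace HG

variable {α : Type*} [DecidableEq α]

/-- The carrier of a hypergraph: the union of its members. -/
def carrier (H : Finset (Finset α)) : Finset α := H.sup id

/-- A hypergraph (on its carrier) is a finite family of sets not containing `∅`. -/
def IsHypergraph (H : Finset (Finset α)) : Prop := ∅ ∉ H

/-- The restriction `H_Y = {X ∈ H ∣ X ⊆ Y}`. -/
def restrict (H : Finset (Finset α)) (Y : Finset α) : Finset (Finset α) :=
  H.filter (· ⊆ Y)

/-- `x` and `y` are joined by a path of `H`: a nonempty sequence of distinct members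
of `H`, consecutive members intersecting, the first containing `x`, the last `y`. -/
def Joined (H : Finset (Finset α)) (x y : α) : Prop :=
  ∃ (X : Finset α) (l : List (Finset α)),
    (X :: l).Nodup ∧ (∀ Z ∈ X :: l, Z ∈ H) ∧
    (X :: l).Chain' (fun A B => (A ∩ B).Nonempty) ∧
    x ∈ X ∧ y ∈ (X :: l).getLast (List.cons_ne_nil X l)

/-- Path-connectedness of a hypergraph: any two carrier elements are joined. -/
def Conn (H : Finset (Finset α)) : Prop :=
  ∀ x ∈ carrier H, ∀ y ∈ carrier H, Joined H x y

/-- `P` is a hypergraph partition of `H`: a partition of `H` whose family of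
carriers is a partition of the carrier of `H`. -/
def IsHGPartition (H : Finset (Finset α)) (P : Finset (Finset (Finset α))) : Prop :=
  (∀ Q ∈ P, Q ≠ ∅) ∧
  (∀ Q ∈ P, ∀ Q' ∈ P, Q ≠ Q' → Disjoint Q Q') ∧
  P.sup id = H ∧
  (∀ Q ∈ P, ∀ Q' ∈ P, Q ≠ Q' → Disjoint (carrier Q) (carrier Q'))

/-- A hypergraph is atomic when it contains all singletons of carrier elements. -/
def Atomic (H : Finset (Finset α)) : Prop := ∀ x ∈ carrier H, {x} ∈ H

/-- A hypergraph is saturated when intersecting members have their union in it. -/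
def Saturated (H : Finset (Finset α)) : Prop :=
  ∀ X ∈ H, ∀ Y ∈ H, (X ∩ Y).Nonempty → X ∪ Y ∈ H

/-- `Y` is dispensable in `H` when `(H_Y) \ {Y}` is a connected hypergraph on `Y`. -/
def Dispensable (H : Finset (Finset α)) (Y : Finset α) : Prop :=
  IsHypergraph ((restrict H Y).erase Y) ∧
  carrier ((restrict H Y).erase Y) = Y ∧
  Conn ((restrict H Y).erase Y)

/-- `J` enhances `H` when `J = H ∪ {Y}` for some `Y ∉ H` dispensable in `H`. -/
def Enhances (J H : Finset (Finset α)) : Prop :=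
  ∃ Y, Dispensable H Y ∧ Y ∉ H ∧ J = insert Y H

/-- Cognation: the equivalence closure of the enhancement relation. -/
def Cognate (H J : Finset (Finset α)) : Prop :=
  Relation.EqvGen Enhances H J

/-- The finest hypergraph partition: one all of whose parts are connected. -/
def FinestHGPartition (H : Finset (Finset α)) (P : Finset (Finset (Finset α))) : Prop :=
  IsHGPartition H P ∧ ∀ Q ∈ P, Conn Q

/-- Constructions of a hypergraph, defined recursively. -/
inductive IsConstruction : Finset (Finset α) → Finset (Finset α) → Prop
  | empty : IsConstruction ∅ ∅
  | conn {H K : Finset (Finset α)} {x : α} :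
      (carrier H).Nonempty → Conn H → x ∈ carrier H →
      IsConstruction (restrict H ((carrier H).erase x)) K →
      IsConstruction H (insert (carrier H) K)
  | parts {H : Finset (Finset α)} {P : Finset (Finset (Finset α))}
      {K : Finset (Finset α) → Finset (Finset α)} :
      2 ≤ (carrier H).card → ¬ Conn H → 2 ≤ P.card → FinestHGPartition H P →
      (∀ Q ∈ P, IsConstruction Q (K Q)) →
      IsConstruction H (P.sup K)

/-- An `M`-antichain: at least two members of `M`, pairwise incomparable. -/
def IsAntichainIn (M S : Finset (Finset α)) : Prop :=
  S ⊆ M ∧ 2 ≤ S.card ∧ ∀ X ∈ S, ∀ Y ∈ S, X ≠ Y → ¬ X ⊆ Y ∧ ¬ Y ⊆ X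

/-- `S` misses `H` when the union of `S` is not a member of `H`. -/
def Misses (H S : Finset (Finset α)) : Prop := S.sup id ∉ H

/-- `x` is `X`-superficial relative to `M`. -/
def Superficial (M : Finset (Finset α)) (X : Finset α) (x : α) : Prop :=
  x ∈ X ∧ ∀ Y ∈ M, Y ⊂ X → x ∉ Y

/-- ASC-hypergraph: atomic, saturated and connected hypergraph. -/
def ASC (H : Finset (Finset α)) : Prop :=
  IsHypergraph H ∧ Atomic H ∧ Saturated H ∧ Conn H

end HG

open HG

/-!
The invariant behind both sides is the family of connected sets of `H`: the nonempty `Y`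
such that `H_Y` is a connected hypergraph with carrier `Y`. An enhancement adds a set that
is already connected, so this family is invariant under cognation; conversely `H` is cognate
to the family itself, by adjoining its missing members one at a time, each of which is
dispensable. On the other side, every clause of the definition of constructions (carrier,
connectedness, restriction to a subset, the components of the finest partition) is determined
by the connected sets, so two hypergraphs with the same connected sets have the same
constructions; and the union of all constructions of `H` is exactly its family of connected
sets, so the constructions determine that family.
-/

namespace HG

section

variable {α : Type*} {H J : Finset (Finset α)}

lemma IsHypergraph.nonempty_of_mem (hH : IsHypergraph H) {E : Finset α} (hE : E ∈ H) :
    E.Nonempty :=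
  Finset.nonempty_iff_ne_empty.2 fun h => hH (h ▸ hE)

lemma IsHypergraph.mono (hJ : IsHypergraph J) (h : H ⊆ J) : IsHypergraph H :=
  fun h' => hJ (h h')

def Adj (H : Finset (Finset α)) (x y : α) : Prop := ∃ E ∈ H, x ∈ E ∧ y ∈ E

def Reach (H : Finset (Finset α)) : α → α → Prop := Relation.ReflTransGen (Adj H)

instance : Std.Symm (Adj H) := ⟨fun _ _ ⟨E, hE, hx, hy⟩ => ⟨E, hE, hy, hx⟩⟩

lemma Adj.reach {x y : α} (h : Adj H x y) : Reach H x y :=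
  Relation.ReflTransGen.single h

lemma Reach.symm {x y : α} (h : Reach H x y) : Reach H y x :=
  Relation.ReflTransGen.stdSymm.symm _ _ h

lemma Reach.trans {x y z : α} (h : Reach H x y) (h' : Reach H y z) : Reach H x z :=
  Relation.ReflTransGen.trans h h'

lemma Reach.mono (hHJ : H ⊆ J) {x y : α} (h : Reach H x y) : Reach J x y :=
  Relation.ReflTransGen.mono (r := Adj H) (p := Adj J)
    (fun _ _ ⟨E, hE, hx, hy⟩ => ⟨E, hHJ hE, hx, hy⟩) _ _ h

end

variable {α : Type*} [DecidableEq α] {H J : Finset (Finset α)}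

lemma mem_carrier {x : α} : x ∈ carrier H ↔ ∃ E ∈ H, x ∈ E := by
  simp [carrier, Finset.mem_sup]

lemma subset_carrier {E : Finset α} (hE : E ∈ H) : E ⊆ carrier H :=
  fun _ hx => mem_carrier.2 ⟨E, hE, hx⟩

lemma carrier_mono (h : H ⊆ J) : carrier H ⊆ carrier J :=
  Finset.sup_mono h

lemma carrier_insert (Y : Finset α) : carrier (insert Y H) = Y ∪ carrier H :=
  Finset.sup_insert

lemma mem_restrict {S Z : Finset α} : Z ∈ restrict H S ↔ Z ∈ H ∧ Z ⊆ S :=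
  Finset.mem_filter

lemma restrict_subset (S : Finset α) : restrict H S ⊆ H :=
  Finset.filter_subset _ _

lemma restrict_mono {S T : Finset α} (h : S ⊆ T) : restrict H S ⊆ restrict H T :=
  fun _ hZ => mem_restrict.2 ⟨(mem_restrict.1 hZ).1, (mem_restrict.1 hZ).2.trans h⟩

lemma carrier_restrict_subset (S : Finset α) : carrier (restrict H S) ⊆ S :=
  Finset.sup_le fun _ hZ => (mem_restrict.1 hZ).2

lemma restrict_restrict {S T : Finset α} (h : T ⊆ S) :
    restrict (restrict H S) T = restrict H T := by
  ext Z
  simp only [mem_restrict]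
  exact ⟨fun hZ => ⟨hZ.1.1, hZ.2⟩, fun hZ => ⟨⟨hZ.1, hZ.2.trans h⟩, hZ.2⟩⟩

lemma restrict_carrier : restrict H (carrier H) = H :=
  Finset.filter_true_of_mem fun _ => subset_carrier

lemma IsHypergraph.restrict (hH : IsHypergraph H) (S : Finset α) :
    IsHypergraph (restrict H S) :=
  hH.mono (restrict_subset S)

lemma IsHypergraph.eq_empty_of_carrier_eq_empty (hH : IsHypergraph H) (h : carrier H = ∅) :
    H = ∅ :=
  Finset.eq_empty_of_forall_notMem fun _ hE =>
    (hH.nonempty_of_mem hE).ne_empty (Finset.subset_empty.1 (h ▸ subset_carrier hE))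

lemma Reach.mem_carrier {x y : α} (h : Reach H x y) (hy : y ∈ carrier H) : x ∈ carrier H := by
  rcases h.cases_head with rfl | ⟨_, ⟨E, hE, hx, _⟩, _⟩
  exacts [hy, subset_carrier hE hx]

lemma reach_of_joined {x y : α} (h : Joined H x y) : Reach H x y := by
  obtain ⟨X, l, -, hmem, hchain, hx, hy⟩ := h
  induction l generalizing X x with
  | nil => exact Adj.reach ⟨X, hmem X (by simp), hx, by simpa using hy⟩
  | cons B l ih =>
    obtain ⟨⟨w, hw⟩, hchain⟩ := List.isChain_cons_cons.1 hchain
    rw [Finset.mem_inter] at hw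
    exact Relation.ReflTransGen.head ⟨X, hmem X (by simp), hx, hw.1⟩
      (ih B (fun Z hZ => hmem Z (List.mem_cons_of_mem X hZ)) hchain hw.2 (by simpa using hy))

/-- If `E` already occurs on the path, the path is cut at `E` instead of extended,
which keeps it duplicate-free. -/
lemma Joined.head {x w y : α} {E : Finset α} (hE : E ∈ H) (hx : x ∈ E) (hw : w ∈ E)
    (h : Joined H w y) : Joined H x y := by
  obtain ⟨X, l, hnd, hmem, hchain, hwX, hy⟩ := h
  by_cases hEl : E ∈ X :: l
  · obtain ⟨s, t, hst⟩ := List.mem_iff_append.1 hEl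
    have hsuf : E :: t <:+ X :: l := hst ▸ List.suffix_append s (E :: t)
    refine ⟨E, t, hnd.sublist hsuf.sublist, fun Z hZ => hmem Z (hsuf.subset hZ),
      hchain.suffix hsuf, hx, ?_⟩
    rwa [hsuf.getLast]
  · refine ⟨E, X :: l, List.nodup_cons.2 ⟨hEl, hnd⟩, ?_,
      List.IsChain.cons_cons ⟨w, Finset.mem_inter.2 ⟨hw, hwX⟩⟩ hchain, hx,
      by simpa using hy⟩
    exact List.forall_mem_cons.2 ⟨hE, hmem⟩

lemma joined_of_reach {x y : α} (hx : x ∈ carrier H) (h : Reach H x y) : Joined H x y := by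
  induction h using Relation.ReflTransGen.head_induction_on with
  | refl =>
    obtain ⟨E, hE, hxE⟩ := mem_carrier.1 hx
    exact ⟨E, [], by simp, by simpa using hE, List.isChain_singleton E, hxE, hxE⟩
  | head hxw _ ih =>
    obtain ⟨E, hE, hxE, hwE⟩ := hxw
    exact (ih (subset_carrier hE hwE)).head hE hxE hwE

lemma conn_iff_reach : Conn H ↔ ∀ x ∈ carrier H, ∀ y ∈ carrier H, Reach H x y :=
  ⟨fun h x hx y hy => reach_of_joined (h x hx y hy),
    fun h x hx y hy => joined_of_reach hx (h x hx y hy)⟩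

/-! ### Connected sets -/

open Classical in
/-- The unions of connected subfamilies of `H`. -/
noncomputable def connectedSets (H : Finset (Finset α)) : Finset (Finset α) :=
  (carrier H).powerset.filter fun Y =>
    Y.Nonempty ∧ carrier (restrict H Y) = Y ∧ Conn (restrict H Y)

lemma mem_connectedSets {Y : Finset α} :
    Y ∈ connectedSets H ↔
      Y.Nonempty ∧ carrier (restrict H Y) = Y ∧ Conn (restrict H Y) := by
  simp only [connectedSets, Finset.mem_filter, Finset.mem_powerset, and_iff_right_iff_imp]
  rintro ⟨-, hY, -⟩
  exact hY ▸ carrier_mono (restrict_subset Y)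

lemma subset_carrier_of_mem_connectedSets {Y : Finset α} (hY : Y ∈ connectedSets H) :
    Y ⊆ carrier H :=
  (mem_connectedSets.1 hY).2.1 ▸ carrier_mono (restrict_subset Y)

lemma mem_connectedSets_of_mem {E : Finset α} (hE : E ∈ H) (hne : E.Nonempty) :
    E ∈ connectedSets H := by
  have hEr : E ∈ restrict H E := mem_restrict.2 ⟨hE, subset_rfl⟩
  have hspan : carrier (restrict H E) = E :=
    (carrier_restrict_subset E).antisymm (subset_carrier hEr)
  refine mem_connectedSets.2 ⟨hne, hspan, conn_iff_reach.2 fun x hx y hy => ?_⟩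
  rw [hspan] at hx hy
  exact Adj.reach ⟨E, hEr, hx, hy⟩

lemma subset_connectedSets (hH : IsHypergraph H) : H ⊆ connectedSets H :=
  fun _ hE => mem_connectedSets_of_mem hE (hH.nonempty_of_mem hE)

lemma carrier_subset_of_connectedSets_subset (h : connectedSets H ⊆ connectedSets J) :
    carrier H ⊆ carrier J := fun x hx => by
  obtain ⟨E, hE, hxE⟩ := mem_carrier.1 hx
  exact subset_carrier_of_mem_connectedSets (h (mem_connectedSets_of_mem hE ⟨x, hxE⟩)) hxE

lemma carrier_eq_of_connectedSets_eq (h : connectedSets H = connectedSets J) :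
    carrier H = carrier J :=
  (carrier_subset_of_connectedSets_subset h.le).antisymm
    (carrier_subset_of_connectedSets_subset h.ge)

lemma connectedSets_restrict (S : Finset α) :
    connectedSets (restrict H S) = (connectedSets H).filter (· ⊆ S) := by
  ext Y
  rw [Finset.mem_filter]
  constructor
  · intro hY
    have hYS : Y ⊆ S :=
      (subset_carrier_of_mem_connectedSets hY).trans (carrier_restrict_subset S)
    rw [mem_connectedSets, restrict_restrict hYS] at hY
    exact ⟨mem_connectedSets.2 hY, hYS⟩
  · rintro ⟨hY, hYS⟩
    rwa [mem_connectedSets, restrict_restrict hYS, ← mem_connectedSets]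

lemma mem_connectedSets_restrict {S Y : Finset α} :
    Y ∈ connectedSets (restrict H S) ↔ Y ∈ connectedSets H ∧ Y ⊆ S := by
  rw [connectedSets_restrict, Finset.mem_filter]

lemma reach_of_mem_connectedSets {Y : Finset α} (hY : Y ∈ connectedSets H) {x y : α}
    (hx : x ∈ Y) (hy : y ∈ Y) : Reach H x y := by
  obtain ⟨-, hspan, hconn⟩ := mem_connectedSets.1 hY
  rw [← hspan] at hx hy
  exact (conn_iff_reach.1 hconn x hx y hy).mono (restrict_subset Y)

lemma conn_iff_carrier_mem_connectedSets (hne : (carrier H).Nonempty) :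
    Conn H ↔ carrier H ∈ connectedSets H := by
  rw [mem_connectedSets, restrict_carrier]
  exact ⟨fun h => ⟨hne, rfl, h⟩, fun h => h.2.2⟩

lemma conn_congr (h : connectedSets H = connectedSets J) : Conn H ↔ Conn J := by
  have hcar := carrier_eq_of_connectedSets_eq h
  rcases (carrier H).eq_empty_or_nonempty with hemp | hne
  · simp [Conn, hemp, ← hcar]
  · rw [conn_iff_carrier_mem_connectedSets hne, conn_iff_carrier_mem_connectedSets (hcar ▸ hne),
      h, hcar]

open Classical in
noncomputable def component (H : Finset (Finset α)) (x : α) : Finset α :=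
  (carrier H).filter (Reach H x)

lemma mem_component {x y : α} : y ∈ component H x ↔ y ∈ carrier H ∧ Reach H x y := by
  simp only [component, Finset.mem_filter]

lemma component_subset_carrier (x : α) : component H x ⊆ carrier H :=
  fun _ hy => (mem_component.1 hy).1

lemma self_mem_component {x : α} (hx : x ∈ carrier H) : x ∈ component H x :=
  mem_component.2 ⟨hx, Relation.ReflTransGen.refl⟩

lemma component_eq_of_mem {x y : α} (hy : y ∈ component H x) :
    component H y = component H x := by
  ext z
  simp only [mem_component]
  have hxy := (mem_component.1 hy).2
  exact and_congr_right fun _ => ⟨hxy.trans, hxy.symm.trans⟩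

lemma subset_component {E : Finset α} (hE : E ∈ H) {x y : α} (hy : y ∈ E)
    (hyx : y ∈ component H x) : E ⊆ component H x := fun _ hz =>
  mem_component.2
    ⟨subset_carrier hE hz, (mem_component.1 hyx).2.trans (Adj.reach ⟨E, hE, hy, hz⟩)⟩

lemma subset_component_of_mem_connectedSets {Y : Finset α} (hY : Y ∈ connectedSets H) {x : α}
    (hx : x ∈ Y) : Y ⊆ component H x := fun _ hy =>
  mem_component.2
    ⟨subset_carrier_of_mem_connectedSets hY hy, reach_of_mem_connectedSets hY hx hy⟩

lemma carrier_restrict_component (x : α) :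
    carrier (restrict H (component H x)) = component H x := by
  refine (carrier_restrict_subset _).antisymm fun y hy => ?_
  obtain ⟨E, hE, hyE⟩ := mem_carrier.1 (component_subset_carrier x hy)
  exact subset_carrier (mem_restrict.2 ⟨hE, subset_component hE hyE hy⟩) hyE

lemma Reach.restrict_component {x y z : α} (h : Reach H y z) (hy : y ∈ component H x) :
    Reach (restrict H (component H x)) y z := by
  induction h with
  | refl => exact Relation.ReflTransGen.refl
  | tail hyb hbc ih =>
    obtain ⟨E, hE, hbE, hcE⟩ := hbc
    have hb : _ ∈ component H x :=
      mem_component.2 ⟨subset_carrier hE hbE, (mem_component.1 hy).2.trans hyb⟩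
    exact ih.tail ⟨E, mem_restrict.2 ⟨hE, subset_component hE hbE hb⟩, hbE, hcE⟩

lemma component_mem_connectedSets {x : α} (hx : x ∈ carrier H) :
    component H x ∈ connectedSets H := by
  refine mem_connectedSets.2 ⟨⟨x, self_mem_component hx⟩, carrier_restrict_component x,
    conn_iff_reach.2 fun a ha b hb => ?_⟩
  rw [carrier_restrict_component] at ha hb
  exact ((mem_component.1 ha).2.symm.trans (mem_component.1 hb).2).restrict_component ha

lemma component_ssubset_carrier (hnc : ¬ Conn H) (x : α) : component H x ⊂ carrier H := by
  refine (Finset.ssubset_iff_of_subset (component_subset_carrier x)).2 ?_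
  by_contra! h
  refine hnc (conn_iff_reach.2 fun a ha b hb => ?_)
  exact (mem_component.1 (h a ha)).2.symm.trans (mem_component.1 (h b hb)).2

lemma mem_component_iff {x y : α} :
    y ∈ component H x ↔ ∃ Y ∈ connectedSets H, x ∈ Y ∧ y ∈ Y := by
  refine ⟨fun hy => ?_,
    fun ⟨Y, hY, hx, hy⟩ => subset_component_of_mem_connectedSets hY hx hy⟩
  have hx := (mem_component.1 hy).2.mem_carrier (mem_component.1 hy).1
  exact ⟨component H x, component_mem_connectedSets hx, self_mem_component hx, hy⟩

lemma component_congr (h : connectedSets H = connectedSets J) : component H = component J := by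
  ext x y
  rw [mem_component_iff, mem_component_iff, h]

noncomputable def finestPartition (H : Finset (Finset α)) : Finset (Finset (Finset α)) :=
  (carrier H).image fun x => restrict H (component H x)

lemma mem_finestPartition {Q : Finset (Finset α)} :
    Q ∈ finestPartition H ↔ ∃ x ∈ carrier H, restrict H (component H x) = Q :=
  Finset.mem_image

lemma two_le_card_carrier_of_not_conn (hnc : ¬ Conn H) : 2 ≤ (carrier H).card := by
  by_contra! h
  refine hnc fun x hx y hy => ?_
  obtain rfl := Finset.card_le_one.1 (Nat.le_of_lt_succ h) x hx y hy
  exact joined_of_reach hx Relation.ReflTransGen.refl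

lemma finestHGPartition_finestPartition (hH : IsHypergraph H) :
    FinestHGPartition H (finestPartition H) := by
  have hcarrier : ∀ Q ∈ finestPartition H, ∃ x ∈ carrier H,
      restrict H (component H x) = Q ∧ carrier Q = component H x := by
    intro Q hQ
    obtain ⟨x, hx, rfl⟩ := mem_finestPartition.1 hQ
    exact ⟨x, hx, rfl, carrier_restrict_component x⟩
  have hdisj : ∀ Q ∈ finestPartition H, ∀ Q' ∈ finestPartition H, Q ≠ Q' →
      Disjoint (carrier Q) (carrier Q') := by
    intro Q hQ Q' hQ' hne
    obtain ⟨x, -, rfl, hx⟩ := hcarrier Q hQ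
    obtain ⟨y, -, rfl, hy⟩ := hcarrier Q' hQ'
    rw [hx, hy, Finset.disjoint_left]
    intro z hzx hzy
    exact hne (by rw [← component_eq_of_mem hzx, ← component_eq_of_mem hzy])
  refine ⟨⟨fun Q hQ => ?_, fun Q hQ Q' hQ' hne => ?_, ?_, hdisj⟩, fun Q hQ => ?_⟩
  · obtain ⟨x, hx, rfl, -⟩ := hcarrier Q hQ
    obtain ⟨E, hE, hxE⟩ := mem_carrier.1 hx
    exact Finset.ne_empty_of_mem
      (mem_restrict.2 ⟨hE, subset_component hE hxE (self_mem_component hx)⟩)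
  · refine Finset.disjoint_left.2 fun E hE hE' => ?_
    obtain ⟨x, -, rfl, -⟩ := hcarrier Q hQ
    obtain ⟨z, hz⟩ := hH.nonempty_of_mem (restrict_subset _ hE)
    exact Finset.disjoint_left.1 (hdisj _ hQ Q' hQ' hne) (subset_carrier hE hz)
      (subset_carrier hE' hz)
  · refine (Finset.sup_le fun Q hQ => ?_).antisymm fun E hE => ?_
    · obtain ⟨x, -, rfl, -⟩ := hcarrier Q hQ
      exact restrict_subset _
    · obtain ⟨x, hx⟩ := hH.nonempty_of_mem hE
      have hxH := subset_carrier hE hx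
      exact Finset.mem_sup.2 ⟨_, mem_finestPartition.2 ⟨x, hxH, rfl⟩,
        mem_restrict.2 ⟨hE, subset_component hE hx (self_mem_component hxH)⟩⟩
  · obtain ⟨x, hx, rfl, -⟩ := hcarrier Q hQ
    exact (mem_connectedSets.1 (component_mem_connectedSets hx)).2.2

lemma finestPartition_congr (h : connectedSets H = connectedSets J) :
    finestPartition J = (finestPartition H).image fun Q => restrict J (carrier Q) := by
  rw [finestPartition, finestPartition, Finset.image_image, carrier_eq_of_connectedSets_eq h]
  refine Finset.image_congr fun x _ => ?_
  rw [Function.comp_apply, carrier_restrict_component, component_congr h]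

lemma carrier_mem_connectedSets_of_mem_finestPartition {Q : Finset (Finset α)}
    (hQ : Q ∈ finestPartition H) : carrier Q ∈ connectedSets H := by
  obtain ⟨x, hx, rfl⟩ := mem_finestPartition.1 hQ
  rw [carrier_restrict_component]
  exact component_mem_connectedSets hx

section FinestHGPartition

variable {P : Finset (Finset (Finset α))} (hP : FinestHGPartition H P)
include hP

lemma FinestHGPartition.subset {Q : Finset (Finset α)} (hQ : Q ∈ P) : Q ⊆ H :=
  fun _ hZ => hP.1.2.2.1 ▸ Finset.mem_sup.2 ⟨Q, hQ, hZ⟩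

lemma FinestHGPartition.exists_mem {E : Finset α} (hE : E ∈ H) : ∃ Q ∈ P, E ∈ Q :=
  Finset.mem_sup.1 (hP.1.2.2.1.symm ▸ hE)

lemma FinestHGPartition.eq_of_mem_carrier {Q Q' : Finset (Finset α)} (hQ : Q ∈ P)
    (hQ' : Q' ∈ P)
    {x : α} (hx : x ∈ carrier Q) (hx' : x ∈ carrier Q') : Q = Q' := by
  by_contra hne
  exact Finset.disjoint_left.1 (hP.1.2.2.2 Q hQ Q' hQ' hne) hx hx'

lemma FinestHGPartition.carrier_eq_component {Q : Finset (Finset α)} (hQ : Q ∈ P) {x : α}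
    (hx : x ∈ carrier Q) : carrier Q = component H x := by
  refine Finset.Subset.antisymm (fun y hy => mem_component.2 ⟨carrier_mono (hP.subset hQ) hy,
    (reach_of_joined (hP.2 Q hQ x hx y hy)).mono (hP.subset hQ)⟩) fun y hy => ?_
  obtain ⟨-, hxy⟩ := mem_component.1 hy
  clear hy
  induction hxy with
  | refl => exact hx
  | tail _ hbc hb =>
    obtain ⟨E, hE, hbE, hcE⟩ := hbc
    obtain ⟨Q', hQ', hEQ'⟩ := hP.exists_mem hE
    rw [hP.eq_of_mem_carrier hQ hQ' hb (subset_carrier hEQ' hbE)]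
    exact subset_carrier hEQ' hcE

lemma FinestHGPartition.restrict_carrier (hH : IsHypergraph H) {Q : Finset (Finset α)}
    (hQ : Q ∈ P) : restrict H (carrier Q) = Q := by
  refine Finset.Subset.antisymm (fun E hE => ?_) fun E hE =>
    mem_restrict.2 ⟨hP.subset hQ hE, subset_carrier hE⟩
  obtain ⟨hEH, hEQ⟩ := mem_restrict.1 hE
  obtain ⟨Q', hQ', hEQ'⟩ := hP.exists_mem hEH
  obtain ⟨x, hx⟩ := hH.nonempty_of_mem hEH
  rwa [hP.eq_of_mem_carrier hQ hQ' (hEQ hx) (subset_carrier hEQ' hx)]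

lemma FinestHGPartition.eq_finestPartition (hH : IsHypergraph H) : P = finestPartition H := by
  ext Q
  rw [mem_finestPartition]
  constructor
  · intro hQ
    obtain ⟨E, hE⟩ := Finset.nonempty_iff_ne_empty.2 (hP.1.1 Q hQ)
    obtain ⟨x, hx⟩ := hH.nonempty_of_mem (hP.subset hQ hE)
    have hxQ := subset_carrier hE hx
    exact ⟨x, carrier_mono (hP.subset hQ) hxQ,
      by rw [← hP.carrier_eq_component hQ hxQ, hP.restrict_carrier hH hQ]⟩
  · rintro ⟨x, hx, rfl⟩
    obtain ⟨E, hE, hxE⟩ := mem_carrier.1 hx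
    obtain ⟨Q, hQ, hEQ⟩ := hP.exists_mem hE
    have hxQ := subset_carrier hEQ hxE
    rwa [← hP.carrier_eq_component hQ hxQ, hP.restrict_carrier hH hQ]

lemma FinestHGPartition.two_le_card (hnc : ¬ Conn H) : 2 ≤ P.card := by
  by_contra! h
  refine hnc fun x hx y hy => ?_
  obtain ⟨E, hE, hxE⟩ := mem_carrier.1 hx
  obtain ⟨F, hF, hyF⟩ := mem_carrier.1 hy
  obtain ⟨Q, hQ, hEQ⟩ := hP.exists_mem hE
  obtain ⟨Q', hQ', hFQ'⟩ := hP.exists_mem hF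
  obtain rfl := Finset.card_le_one.1 (Nat.le_of_lt_succ h) Q hQ Q' hQ'
  exact joined_of_reach (subset_carrier hE hxE) ((reach_of_joined
    (hP.2 Q hQ x (subset_carrier hEQ hxE) y (subset_carrier hFQ' hyF))).mono (hP.subset hQ))

end FinestHGPartition

/-! ### Constructions -/

theorem IsConstruction.subset_connectedSets {K : Finset (Finset α)} (hK : IsConstruction H K)
    (hH : IsHypergraph H) : K ⊆ connectedSets H := by
  induction hK with
  | empty => exact Finset.empty_subset _
  | conn hne hconn _ _ ih =>
    refine Finset.insert_subset ((conn_iff_carrier_mem_connectedSets hne).1 hconn) fun Y hY => ?_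
    exact (mem_connectedSets_restrict.1 (ih (hH.restrict _) hY)).1
  | parts _ _ _ hP _ ih =>
    refine Finset.sup_le fun Q hQ Y hY => ?_
    have hY' := ih Q hQ (hH.mono (hP.subset hQ)) hY
    rw [← hP.restrict_carrier hH hQ] at hY'
    exact (mem_connectedSets_restrict.1 hY').1

theorem IsConstruction.of_connectedSets_eq {K : Finset (Finset α)} (hK : IsConstruction H K)
    (hH : IsHypergraph H) (hJ : IsHypergraph J) (h : connectedSets H = connectedSets J) :
    IsConstruction J K := by
  induction hK generalizing J with
  | empty =>
    rw [hJ.eq_empty_of_carrier_eq_empty (carrier_eq_of_connectedSets_eq h).symm]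
    exact .empty
  | @conn H K x hne hconn hx _ ih =>
    have hcar := carrier_eq_of_connectedSets_eq h
    rw [hcar] at hne hx ⊢
    refine .conn hne ((conn_congr h).1 hconn) hx (ih (hH.restrict _) (hJ.restrict _) ?_)
    rw [connectedSets_restrict, connectedSets_restrict, h, hcar]
  | @parts H P K h2 hnc _ hP _ ih =>
    obtain rfl := hP.eq_finestPartition hH
    have hcar := carrier_eq_of_connectedSets_eq h
    have hncJ : ¬ Conn J := (conn_congr h).not.1 hnc
    have hspan : ∀ Q ∈ finestPartition H, carrier (restrict J (carrier Q)) = carrier Q :=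
      fun Q hQ => (mem_connectedSets.1
        (h ▸ carrier_mem_connectedSets_of_mem_finestPartition hQ)).2.1
    have hsup : (finestPartition J).sup (fun R => K (restrict H (carrier R))) =
        (finestPartition H).sup K := by
      rw [finestPartition_congr h, Finset.sup_image]
      exact Finset.sup_congr rfl fun Q hQ => by
        rw [Function.comp_apply, hspan Q hQ, hP.restrict_carrier hH hQ]
    rw [← hsup]
    refine .parts (hcar ▸ h2) hncJ ((finestHGPartition_finestPartition hJ).two_le_card hncJ)
      (finestHGPartition_finestPartition hJ) fun R hR => ?_
    rw [finestPartition_congr h] at hR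
    obtain ⟨Q, hQ, rfl⟩ := Finset.mem_image.1 hR
    rw [hspan Q hQ, hP.restrict_carrier hH hQ]
    refine ih Q hQ (hH.mono (hP.subset hQ)) (hJ.restrict _) ?_
    calc connectedSets Q = connectedSets (restrict H (carrier Q)) := by
          rw [hP.restrict_carrier hH hQ]
      _ = connectedSets (restrict J (carrier Q)) := by
          rw [connectedSets_restrict, connectedSets_restrict, h]

lemma card_carrier_restrict_lt {S : Finset α} (hS : S ⊂ carrier H) :
    (carrier (restrict H S)).card < (carrier H).card :=
  (Finset.card_le_card (carrier_restrict_subset S)).trans_lt (Finset.card_lt_card hS)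

/-- Taking `Y = ∅` shows that every hypergraph has a construction. -/
theorem exists_isConstruction (hH : IsHypergraph H) (Y : Finset α) :
    ∃ K, IsConstruction H K ∧ (Y ∈ connectedSets H → Y ∈ K) := by
  induction hn : (carrier H).card using Nat.strong_induction_on generalizing H with
  | _ n ih =>
  subst hn
  rcases (carrier H).eq_empty_or_nonempty with hemp | hne
  · refine ⟨∅, hH.eq_empty_of_carrier_eq_empty hemp ▸ .empty, fun hY => ?_⟩
    obtain ⟨y, hy⟩ := (mem_connectedSets.1 hY).1
    simpa [hemp] using subset_carrier_of_mem_connectedSets hY hy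
  by_cases hconn : Conn H
  · obtain ⟨x, hx, hxY⟩ :
        ∃ x ∈ carrier H, Y ∈ connectedSets H → Y ≠ carrier H → x ∉ Y := by
      by_cases h : Y ∈ connectedSets H ∧ Y ≠ carrier H
      · obtain ⟨x, hx, hxY⟩ := Finset.exists_of_ssubset
          (Finset.ssubset_iff_subset_ne.2 ⟨subset_carrier_of_mem_connectedSets h.1, h.2⟩)
        exact ⟨x, hx, fun _ _ => hxY⟩
      · exact ⟨_, hne.choose_spec, fun h1 h2 => (h ⟨h1, h2⟩).elim⟩
    obtain ⟨K, hK, hYK⟩ := ih _ (card_carrier_restrict_lt (Finset.erase_ssubset hx))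
      (hH.restrict _) rfl
    refine ⟨_, .conn hne hconn hx hK, fun hY => ?_⟩
    by_cases hYc : Y = carrier H
    · exact hYc ▸ Finset.mem_insert_self _ _
    exact Finset.mem_insert_of_mem (hYK (mem_connectedSets_restrict.2 ⟨hY, fun y hy =>
      Finset.mem_erase.2
        ⟨fun h => hxY hY hYc (h ▸ hy), subset_carrier_of_mem_connectedSets hY hy⟩⟩))
  · have hP := finestHGPartition_finestPartition hH
    have hparts : ∀ Q ∈ finestPartition H,
        ∃ K, IsConstruction Q K ∧ (Y ∈ connectedSets Q → Y ∈ K) := by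
      intro Q hQ
      obtain ⟨x, -, rfl⟩ := mem_finestPartition.1 hQ
      exact ih _ (card_carrier_restrict_lt (component_ssubset_carrier hconn x)) (hH.restrict _) rfl
    choose! K hK hYK using hparts
    refine ⟨_, .parts (two_le_card_carrier_of_not_conn hconn) hconn (hP.two_le_card hconn) hP hK,
      fun hY => ?_⟩
    obtain ⟨y, hy⟩ := (mem_connectedSets.1 hY).1
    have hQ : restrict H (component H y) ∈ finestPartition H :=
      mem_finestPartition.2 ⟨y, subset_carrier_of_mem_connectedSets hY hy, rfl⟩
    exact Finset.mem_sup.2 ⟨_, hQ, hYK _ hQ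
      (mem_connectedSets_restrict.2 ⟨hY, subset_component_of_mem_connectedSets hY hy⟩)⟩

theorem mem_connectedSets_iff_exists_isConstruction (hH : IsHypergraph H) {Y : Finset α} :
    Y ∈ connectedSets H ↔ ∃ K, IsConstruction H K ∧ Y ∈ K := by
  refine ⟨fun hY => ?_, fun ⟨K, hK, hYK⟩ => hK.subset_connectedSets hH hYK⟩
  obtain ⟨K, hK, hYK⟩ := exists_isConstruction hH Y
  exact ⟨K, hK, hYK hY⟩

/-! ### Cognation -/

lemma Cognate.symm (h : Cognate H J) : Cognate J H :=
  Relation.EqvGen.symm _ _ h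

lemma Cognate.trans {L : Finset (Finset α)} (h : Cognate H J) (h' : Cognate J L) : Cognate H L :=
  Relation.EqvGen.trans _ _ _ h h'

lemma Enhances.cognate (h : Enhances J H) : Cognate H J :=
  Relation.EqvGen.symm _ _ (Relation.EqvGen.rel _ _ h)

lemma carrier_insert_carrier {D : Finset (Finset α)} (hD : D ⊆ H) :
    carrier (insert (carrier D) H) = carrier H := by
  rw [carrier_insert, Finset.union_eq_right.2 (carrier_mono hD)]

lemma reach_insert_carrier_iff {D : Finset (Finset α)} (hD : D ⊆ H) (hconn : Conn D) {x y : α} :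
    Reach (insert (carrier D) H) x y ↔ Reach H x y := by
  refine ⟨fun h => ?_, Reach.mono (Finset.subset_insert _ _)⟩
  induction h with
  | refl => exact Relation.ReflTransGen.refl
  | tail _ hbc ih =>
    obtain ⟨E, hE, hbE, hcE⟩ := hbc
    rcases Finset.mem_insert.1 hE with rfl | hE
    · exact ih.trans ((conn_iff_reach.1 hconn _ hbE _ hcE).mono hD)
    · exact ih.tail ⟨E, hE, hbE, hcE⟩

lemma conn_insert_carrier_iff {D : Finset (Finset α)} (hD : D ⊆ H) (hconn : Conn D) :
    Conn (insert (carrier D) H) ↔ Conn H := by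
  simp only [conn_iff_reach, carrier_insert_carrier hD, reach_insert_carrier_iff hD hconn]

theorem connectedSets_insert {Y : Finset α} (hspan : carrier (restrict H Y) = Y)
    (hconn : Conn (restrict H Y)) : connectedSets (insert Y H) = connectedSets H := by
  have hZ : ∀ Z, carrier (restrict (insert Y H) Z) = carrier (restrict H Z) ∧
      (Conn (restrict (insert Y H) Z) ↔ Conn (restrict H Z)) := by
    intro Z
    by_cases hYZ : Y ⊆ Z
    · have hD : restrict H Y ⊆ restrict H Z := restrict_mono hYZ
      have hins : restrict (insert Y H) Z = insert (carrier (restrict H Y)) (restrict H Z) := by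
        rw [hspan, restrict, Finset.filter_insert, if_pos hYZ, restrict]
      rw [hins]
      exact ⟨carrier_insert_carrier hD, conn_insert_carrier_iff hD hconn⟩
    · have hins : restrict (insert Y H) Z = restrict H Z := by
        rw [restrict, Finset.filter_insert, if_neg hYZ, restrict]
      rw [hins]
      exact ⟨rfl, Iff.rfl⟩
  ext Z
  rw [mem_connectedSets, mem_connectedSets, (hZ Z).1, (hZ Z).2]

lemma Enhances.connectedSets_eq (h : Enhances J H) : connectedSets J = connectedSets H := by
  obtain ⟨Y, ⟨-, hspan, hconn⟩, hYH, rfl⟩ := h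
  have hYr : Y ∉ restrict H Y := fun hY => hYH (restrict_subset Y hY)
  rw [Finset.erase_eq_of_notMem hYr] at hspan hconn
  exact connectedSets_insert hspan hconn

lemma Cognate.connectedSets_eq (h : Cognate H J) : connectedSets H = connectedSets J := by
  induction h with
  | rel _ _ h => exact h.connectedSets_eq
  | refl => rfl
  | symm _ _ _ ih => exact ih.symm
  | trans _ _ _ _ _ ih ih' => exact ih.trans ih'

lemma dispensable_of_mem_connectedSets (hH : IsHypergraph H) {Y : Finset α}
    (hY : Y ∈ connectedSets H) (hYH : Y ∉ H) : Dispensable H Y := by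
  have hYr : Y ∉ restrict H Y := fun h => hYH (restrict_subset Y h)
  obtain ⟨-, hspan, hconn⟩ := mem_connectedSets.1 hY
  rw [Dispensable, Finset.erase_eq_of_notMem hYr]
  exact ⟨hH.restrict Y, hspan, hconn⟩

lemma cognate_union (hH : IsHypergraph H) {S : Finset (Finset α)} (hS : S ⊆ connectedSets H) :
    Cognate H (H ∪ S) := by
  induction S using Finset.induction_on with
  | empty =>
    rw [Finset.union_empty]
    exact Relation.EqvGen.refl H
  | insert Y S _ ih =>
    have ih := ih ((Finset.subset_insert Y S).trans hS)
    rw [Finset.union_insert]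
    by_cases hY : Y ∈ H ∪ S
    · rwa [Finset.insert_eq_of_mem hY]
    have hHS : IsHypergraph (H ∪ S) := by
      rw [IsHypergraph, Finset.mem_union, not_or]
      exact ⟨hH, fun h =>
        (mem_connectedSets.1 (hS (Finset.mem_insert_of_mem h))).1.ne_empty rfl⟩
    have hYHS : Y ∈ connectedSets (H ∪ S) :=
      ih.connectedSets_eq ▸ hS (Finset.mem_insert_self Y S)
    exact ih.trans (Enhances.cognate ⟨Y, dispensable_of_mem_connectedSets hHS hYHS hY, hY, rfl⟩)

lemma cognate_connectedSets (hH : IsHypergraph H) : Cognate H (connectedSets H) := by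
  simpa [Finset.union_eq_right.2 (subset_connectedSets hH)] using cognate_union hH subset_rfl

end HG

theorem cognate_iff_same_constructions_general
    {α : Type*} [DecidableEq α]
    (H J : Finset (Finset α)) (hH : IsHypergraph H) (hJ : IsHypergraph J) :
    Cognate H J ↔ ∀ K, IsConstruction H K ↔ IsConstruction J K := by
  refine ⟨fun hHJ K => ?_, fun hsame => ?_⟩
  · have h := hHJ.connectedSets_eq
    exact ⟨fun hK => hK.of_connectedSets_eq hH hJ h,
      fun hK => hK.of_connectedSets_eq hJ hH h.symm⟩
  · have h : connectedSets H = connectedSets J := by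
      ext Y
      simp only [mem_connectedSets_iff_exists_isConstruction hH,
        mem_connectedSets_iff_exists_isConstruction hJ, hsame]
    exact (cognate_connectedSets hH).trans (h ▸ (cognate_connectedSets hJ).symm)

theorem cognate_iff_same_constructions
    {α : Type*} [DecidableEq α]
    (H J : Finset (Finset α)) (hH : IsHypergraph H) (hJ : IsHypergraph J)
    (hAH : Atomic H) (hAJ : Atomic J) :
    Cognate H J ↔ ∀ K, IsConstruction H K ↔ IsConstruction J K :=
  cognate_iff_same_constructions_general H J hH hJ
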